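/- Let P ∈ ℝ_max^{n×n} be a matrix whose maximum eigenvalue is 0 (equivalently, the maximum average weight of circuits in G(P) is 0), and let p_i denote the i-th column of P*. If the vertex i lies on a critical circuit of G(P), then p_i is the minimal element, with respect to the entrywise order on ℝ_max^n, of the set U^{(i)} = { (−v_i) ⊗ v : v ∈ U(P,0), v_i ≠ ε }, where U(P,0) = { v ∈ ℝ_max^n : P ⊗ v = v }. -/

import Mathlib

open Filter

noncomputable section

/-- The max-plus semiring ℝ_max = ℝ ∪ {ε}, with ε = ⊥ = −∞,
`a ⊕ b = max a b` and `a ⊗ b = a + b` (the `Add` of `WithBot ℝ`). -/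
abbrev RMax : Type := WithBot ℝ

/-- Max-plus vectors. -/
abbrev Vec (ι : Type) : Type := ι → RMax

/-- The max-plus zero vector ℰ. -/
def zeroV (ι : Type) : Vec ι := fun _ => (⊥ : RMax)

/-- Max-plus "negation" (inversion for ⊗), fixing ⊥. -/
def mpNeg (a : RMax) : RMax := WithBot.map (fun r : ℝ => -r) a

section Defs

variable {ι κ₁ κ₂ κ₃ : Type}

/-- Matrix (or vector) sum `M ⊕ N`, entrywise max. -/
def mpAddM (M N : Matrix κ₁ κ₂ RMax) : Matrix κ₁ κ₂ RMax := fun i j => max (M i j) (N i j)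

/-- Scalar multiplication `l ⊗ M` of a matrix. -/
def smulM (l : RMax) (M : Matrix κ₁ κ₂ RMax) : Matrix κ₁ κ₂ RMax := fun i j => l + M i j

/-- Scalar multiplication `l ⊗ x` of a vector. -/
def smulV (l : RMax) (x : Vec ι) : Vec ι := fun i => l + x i

/-- Max-plus matrix product `M ⊗ N`. -/
def mpMul [Fintype κ₂] (M : Matrix κ₁ κ₂ RMax) (N : Matrix κ₂ κ₃ RMax) : Matrix κ₁ κ₃ RMax :=
  fun i j => Finset.univ.sup fun k => M i k + N k j

/-- Max-plus matrix-vector product `M ⊗ x`. -/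
def mpMulVec [Fintype κ₂] (M : Matrix κ₁ κ₂ RMax) (x : Vec κ₂) : Vec κ₁ :=
  fun i => Finset.univ.sup fun j => M i j + x j

/-- The max-plus identity matrix `E_n` (0 on the diagonal, ε elsewhere). -/
def mpId [DecidableEq ι] : Matrix ι ι RMax := fun i j => if i = j then (0 : RMax) else ⊥

/-- Max-plus inverse of a generalized permutation matrix:
the transpose with the finite entries negated. -/
def genInv (P : Matrix ι ι RMax) : Matrix ι ι RMax := fun i j => mpNeg (P j i)

/-- The max-plus determinant `det A = ⊕_π ⊗_i a_{i π(i)}`. -/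
def mpDet [Fintype ι] [DecidableEq ι] (A : Matrix ι ι RMax) : RMax :=
  Finset.univ.sup fun π : Equiv.Perm ι => ∑ i, A i (π i)

/-- Max-plus matrix powers. -/
def mpPow [Fintype ι] [DecidableEq ι] (P : Matrix ι ι RMax) : ℕ → Matrix ι ι RMax
  | 0 => mpId
  | k + 1 => mpMul P (mpPow P k)

/-- The Kleene star `P* = E ⊕ P ⊕ P^{⊗2} ⊕ ⋯ ⊕ P^{⊗(n−1)}`. -/
def mpStar [Fintype ι] [DecidableEq ι] (P : Matrix ι ι RMax) : Matrix ι ι RMax :=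
  fun i j => (Finset.range (Fintype.card ι)).sup fun k => mpPow P k i j

/-- A multi-circuit on the vertex set `ι`: a union of vertex-disjoint elementary circuits,
encoded by its vertex set `verts` together with the successor permutation `perm`,
which is the identity outside `verts`.  Its edge set is `{(i, perm i) | i ∈ verts}`
and its length is `verts.card`. -/
structure MultiCircuit (ι : Type) where
  verts : Finset ι
  perm : Equiv.Perm ι
  fixes : ∀ i, i ∉ verts → perm i = i

/-- The weight `w(C)` of a multi-circuit with respect to the matrix `A`. -/
def mcWeight (A : Matrix ι ι RMax) (C : MultiCircuit ι) : RMax :=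
  ∑ i ∈ C.verts, A i (C.perm i)

/-- The multi-circuit `C` lies in the graph `G(A)` (all its edges have weight ≠ ε). -/
def InGraph (A : Matrix ι ι RMax) (C : MultiCircuit ι) : Prop :=
  ∀ i ∈ C.verts, A i (C.perm i) ≠ ⊥

/-- A multi-circuit consisting of a single (elementary) circuit. -/
def IsCircuit (C : MultiCircuit ι) : Prop :=
  C.verts.Nonempty ∧ ∀ i ∈ C.verts, ∀ j ∈ C.verts, C.perm.SameCycle i j

/-- `D` is a critical circuit of `G(A)`: an elementary circuit of `G(A)` whose average
weight is maximal among all elementary circuits of `G(A)`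
(averages `w/ℓ` are compared without division via `ℓ' • w ≥ ℓ • w'`). -/
def IsCritical (A : Matrix ι ι RMax) (D : MultiCircuit ι) : Prop :=
  IsCircuit D ∧ InGraph A D ∧
    ∀ D' : MultiCircuit ι, IsCircuit D' → InGraph A D' →
      D.verts.card • mcWeight A D' ≤ D'.verts.card • mcWeight A D

/-- `ρ` is the maximum average weight of the (elementary) circuits of `G(A)`,
taken to be ε if `G(A)` has no circuit. -/
def IsMaxCycleMean (A : Matrix ι ι RMax) (ρ : RMax) : Prop :=
  (∀ D : MultiCircuit ι, IsCircuit D → InGraph A D → mcWeight A D ≤ D.verts.card • ρ) ∧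
    ((∃ D : MultiCircuit ι, IsCircuit D ∧ InGraph A D ∧ mcWeight A D = D.verts.card • ρ) ∨
      (ρ = ⊥ ∧ ∀ D : MultiCircuit ι, IsCircuit D → ¬InGraph A D))

/-- `l` is a (geometric) eigenvalue of `A`: `A ⊗ x = l ⊗ x` for some `x ≠ ℰ`. -/
def IsEigen [Fintype ι] (A : Matrix ι ι RMax) (l : RMax) : Prop :=
  ∃ x : Vec ι, x ≠ zeroV ι ∧ mpMulVec A x = smulV l x

variable [Fintype ι] [DecidableEq ι]

/-- The value `w(C) ⊗ l^{⊗(n − ℓ(C))}` of the term of `χ_A(l)` corresponding to the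
multi-circuit `C`. -/
def ValAt (A : Matrix ι ι RMax) (C : MultiCircuit ι) (l : RMax) : RMax :=
  mcWeight A C + (Fintype.card ι - C.verts.card) • l

/-- `C` is `μ`-maximal (for a real `μ`): it attains
`χ_A(μ) = max_C (w(C) + (n − ℓ(C))·μ)`. -/
def MaximalAt (A : Matrix ι ι RMax) (C : MultiCircuit ι) (μ : ℝ) : Prop :=
  ∀ C' : MultiCircuit ι, ValAt A C' (μ : RMax) ≤ ValAt A C (μ : RMax)

/-- `C` is `l`-maximal, for `l ∈ ℝ_max`; for `l = ε` this means `μ`-maximal for all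
sufficiently small real `μ`. -/
def IsLamMax (A : Matrix ι ι RMax) (C : MultiCircuit ι) (l : RMax) : Prop :=
  (∀ μ : ℝ, l = (μ : RMax) → MaximalAt A C μ) ∧
    (l = ⊥ → ∃ μ₀ : ℝ, ∀ μ : ℝ, μ ≤ μ₀ → MaximalAt A C μ)

/-- `l` is an algebraic eigenvalue of `A`, i.e. a root of the characteristic polynomial
`χ_A(t)`: a real `l` is a root iff there are two `l`-maximal multi-circuits of different
lengths, and `ε` is a root iff `G(A)` contains no multi-circuit of length `n`. -/
def IsAlgEigen (A : Matrix ι ι RMax) (l : RMax) : Prop :=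
  (l ≠ ⊥ ∧ ∃ C C' : MultiCircuit ι, IsLamMax A C l ∧ IsLamMax A C' l ∧
      C.verts.card ≠ C'.verts.card) ∨
    (l = ⊥ ∧ ∀ C : MultiCircuit ι, C.verts.card = Fintype.card ι → ¬InGraph A C)

open Classical in
/-- The multiplicity of `l` as a root of the characteristic polynomial `χ_A(t)`:
for a real `l` it is the difference between the maximal and the minimal length of an
`l`-maximal multi-circuit; for `l = ε` it is `n` minus the maximal length of a
multi-circuit of `G(A)`.  It is `0` when `l` is not a root. -/
noncomputable def rootMult (A : Matrix ι ι RMax) (l : RMax) : ℕ :=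
  if l = ⊥ then
    Fintype.card ι - sSup {m : ℕ | ∃ C : MultiCircuit ι, InGraph A C ∧ C.verts.card = m}
  else
    sSup {m : ℕ | ∃ C : MultiCircuit ι, IsLamMax A C l ∧ C.verts.card = m} -
      sInf {m : ℕ | ∃ C : MultiCircuit ι, IsLamMax A C l ∧ C.verts.card = m}

/-- The matrix `A_C`. -/
def matC (A : Matrix ι ι RMax) (C : MultiCircuit ι) : Matrix ι ι RMax :=
  fun i j => if i ∈ C.verts ∧ j = C.perm i then A i j else ⊥

/-- The matrix `A_{∖C}`. -/
def matNotC (A : Matrix ι ι RMax) (C : MultiCircuit ι) : Matrix ι ι RMax :=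
  fun i j => if i ∈ C.verts ∧ j = C.perm i then ⊥ else A i j

/-- The diagonal matrix `E_C`. -/
def eC (C : MultiCircuit ι) : Matrix ι ι RMax :=
  fun i j => if i = j ∧ i ∈ C.verts then (0 : RMax) else ⊥

/-- The diagonal matrix `E_{∖C}`. -/
def eNotC (C : MultiCircuit ι) : Matrix ι ι RMax :=
  fun i j => if i = j ∧ i ∉ C.verts then (0 : RMax) else ⊥

/-- `W(A,l,C) = {x : (A_{∖C} ⊕ l ⊗ E_C) ⊗ x = (A_C ⊕ l ⊗ E_{∖C}) ⊗ x}`. -/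
def WAC (A : Matrix ι ι RMax) (l : RMax) (C : MultiCircuit ι) : Set (Vec ι) :=
  {x | mpMulVec (mpAddM (matNotC A C) (smulM l (eC C))) x =
       mpMulVec (mpAddM (matC A C) (smulM l (eNotC C))) x}

/-- `B_{A,l,C} = (A_C ⊕ l ⊗ E_{∖C})^{−1} ⊗ (A_{∖C} ⊕ l ⊗ E_C)`. -/
def Bmat (A : Matrix ι ι RMax) (l : RMax) (C : MultiCircuit ι) : Matrix ι ι RMax :=
  mpMul (genInv (mpAddM (matC A C) (smulM l (eNotC C)))) (mpAddM (matNotC A C) (smulM l (eC C)))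

/-- Assumption (★): for each `l ∈ ℝ_max`, any two distinct `l`-maximal multi-circuits
of `G(A)` have different lengths. -/
def StarAssumption (A : Matrix ι ι RMax) : Prop :=
  ∀ l : RMax, ∀ C C' : MultiCircuit ι, IsLamMax A C l → IsLamMax A C' l →
    C.verts.card = C'.verts.card → C = C'

/-- The perturbed matrix `A(ζ;δ)` with entries `a_{ij} − ζ_{ij}·δ` (ε stays ε). -/
def perturb (A : Matrix ι ι RMax) (ζ : Matrix ι ι ℝ) (δ : ℝ) : Matrix ι ι RMax :=
  fun i j => A i j + ((-(ζ i j * δ) : ℝ) : RMax)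

/-- The set `Z` of perturbation directions `ζ ∈ [0,1]^{n×n}` for which `A(ζ;δ)`
satisfies (★) for all sufficiently small `δ > 0`. -/
def Zset (A : Matrix ι ι RMax) : Set (Matrix ι ι ℝ) :=
  {ζ | (∀ i j, ζ i j ∈ Set.Icc (0 : ℝ) 1) ∧
    ∃ δ' : ℝ, 0 < δ' ∧ ∀ δ : ℝ, 0 < δ → δ < δ' → StarAssumption (perturb A ζ δ)}

/-- The interval `B(l, r) = [l − r, l + r] ⊆ ℝ_max` (and `B(ε, r) = {ε}`). -/
def mpBall (l : RMax) (r : ℝ) : Set RMax :=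
  {l' | (l = ⊥ ∧ l' = ⊥) ∨ ∃ x y : ℝ, l = (x : RMax) ∧ l' = (y : RMax) ∧ |y - x| ≤ r}

/-- Convergence in `ℝ_max` as `δ → +0`. -/
def RMaxTendsto (f : ℝ → RMax) (a : RMax) : Prop :=
  (a = ⊥ → ∀ M : ℝ, ∀ᶠ δ in nhdsWithin 0 (Set.Ioi (0 : ℝ)), f δ < (M : RMax)) ∧
    (∀ x : ℝ, a = (x : RMax) → ∀ ε : ℝ, 0 < ε →
      ∀ᶠ δ in nhdsWithin 0 (Set.Ioi (0 : ℝ)), ∃ y : ℝ, f δ = (y : RMax) ∧ |y - x| < ε)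

/-- The (max-plus) sum `⊕_k U_k` of a family of subsets of `ℝ_max^n`. -/
def setSum {κ : Type} (U : κ → Set (Vec ι)) : Set (Vec ι) :=
  {x | ∃ s : Finset κ, ∃ f : κ → Vec ι, (∀ k ∈ s, f k ∈ U k) ∧
    x = fun i => s.sup fun k => f k i}

/-- The limit `lim_{δ→+0} S(δ)` of a parametrized family of subsets of `ℝ_max^n`. -/
def setLim (S : ℝ → Set (Vec ι)) : Set (Vec ι) :=
  {x | ∃ g : ℝ → Vec ι, (∀ δ : ℝ, 0 < δ → g δ ∈ S δ) ∧
    ∀ i : ι, RMaxTendsto (fun δ => g δ i) (x i)}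

/-- The sum `⊕_{l' ∈ S} W(A', l', C_{l'})`, where `C_{l'}` is an `l'`-maximal
multi-circuit of `G(A')`. -/
def perturbSum (A' : Matrix ι ι RMax) (S : Set RMax) : Set (Vec ι) :=
  setSum fun l : S =>
    {x | ∃ C : MultiCircuit ι, IsLamMax A' C (l : RMax) ∧ x ∈ WAC A' (l : RMax) C}

/-- The algebraic eigenspace
`W(A,l) = ⋂_{ζ∈Z} lim_{δ→+0} ⊕_{l' ∈ B(l,nδ)} W(A(ζ;δ), l', C_{l'}(ζ;δ))`. -/
def algEigenspace (A : Matrix ι ι RMax) (l : RMax) : Set (Vec ι) :=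
  ⋂ ζ ∈ Zset A, setLim fun δ => perturbSum (perturb A ζ δ) (mpBall l (Fintype.card ι * δ))

/-- The max-plus span of a set of vectors: all finite max-plus linear combinations. -/
def mpSpan (S : Set (Vec ι)) : Set (Vec ι) :=
  {x | ∃ s : Finset (Vec ι), ↑s ⊆ S ∧ ∃ c : Vec ι → RMax,
    x = fun i => s.sup fun v => c v + v i}

/-- `B` is a basis of `U`: a minimal spanning set. -/
def IsBasis (B U : Set (Vec ι)) : Prop :=
  mpSpan B = U ∧ ∀ B' : Set (Vec ι), B' ⊆ B → mpSpan B' = U → B' = B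

/-- Tropical orthogonality: the maximum in `ᵗx ⊗ y = ⊕_i x_i ⊗ y_i` is attained
at least twice (a maximum equal to ε counting as attained by all indices). -/
def Orthogonal (x y : Vec ι) : Prop :=
  (Finset.univ.sup fun i => x i + y i) = ⊥ ∨
    ∃ i j : ι, i ≠ j ∧ x i + y i = (Finset.univ.sup fun k => x k + y k) ∧
      x j + y j = (Finset.univ.sup fun k => x k + y k)

/-- The tropical kernel of a matrix: vectors for which, in every row, the maximum is
attained at least twice (a maximum equal to ε counting as attained by all indices). -/
def tropKernel {κ : Type} (A : Matrix κ ι RMax) : Set (Vec ι) :=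
  {x | ∀ i : κ, (Finset.univ.sup fun j => A i j + x j) = ⊥ ∨
    ∃ j k : ι, j ≠ k ∧ A i j + x j = (Finset.univ.sup fun j' => A i j' + x j') ∧
      A i k + x k = (Finset.univ.sup fun j' => A i j' + x j')}

/-- `A` is (tropically) nonsingular: the maximum in `det A` is attained by exactly
one permutation. -/
def Nonsingular (A : Matrix ι ι RMax) : Prop :=
  ∃! π : Equiv.Perm ι, (∑ i, A i (π i)) = mpDet A

/-- The minor `A^{(r,c)}`, deleting row `r` and column `c`. -/
def mpMinor {n : ℕ} (A : Matrix (Fin (n + 1)) (Fin (n + 1)) RMax) (r c : Fin (n + 1)) :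
    Matrix (Fin n) (Fin n) RMax :=
  fun i j => A (r.succAbove i) (c.succAbove j)

/-- The max-plus adjugate, `adj(A)_{ij} = det A^{(j,i)}`. -/
def mpAdj {n : ℕ} (A : Matrix (Fin (n + 1)) (Fin (n + 1)) RMax) :
    Matrix (Fin (n + 1)) (Fin (n + 1)) RMax :=
  fun i j => mpDet (mpMinor A j i)

/-- The submatrix `[A_C]_{KK}` with `K = V(C)`. -/
def subPC (A : Matrix ι ι RMax) (C : MultiCircuit ι) :
    Matrix {k // k ∈ C.verts} {k // k ∈ C.verts} RMax :=
  fun i j => matC A C i.1 j.1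

/-- The submatrix `[A_{∖C}]_{KK}` with `K = V(C)`. -/
def subPNC (A : Matrix ι ι RMax) (C : MultiCircuit ι) :
    Matrix {k // k ∈ C.verts} {k // k ∈ C.verts} RMax :=
  fun i j => matNotC A C i.1 j.1

/-- The matrix `M = [A_C]_{KK}^{−1} ⊗ [A_{∖C}]_{KK}`. -/
def xiM (A : Matrix ι ι RMax) (C : MultiCircuit ι) :
    Matrix {k // k ∈ C.verts} {k // k ∈ C.verts} RMax :=
  mpMul (genInv (subPC A C)) (subPNC A C)

/-- `M* ⊗ ([A_C]_{KK}^{−1} ⊗ [A]_{KL}) ⊗ [x]_L`, the `K`-part of `ξ_{A,C}(x)`. -/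
def xiVec (A : Matrix ι ι RMax) (C : MultiCircuit ι) (x : Vec ι) : Vec {k // k ∈ C.verts} :=
  mpMulVec (mpStar (xiM A C)) (mpMulVec (genInv (subPC A C))
    (fun k : {k // k ∈ C.verts} =>
      (Finset.univ.filter fun j : ι => j ∉ C.verts).sup fun j => A k.1 j + x j))

/-- The linear map `ξ_{A,C} : ℝ_max^n → ℝ_max^n`. -/
def xi (A : Matrix ι ι RMax) (C : MultiCircuit ι) (x : Vec ι) : Vec ι :=
  fun i => if h : i ∈ C.verts then xiVec A C x ⟨i, h⟩ else x i

end Defs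

end

/-!
Since `G(P)` has no circuit of positive weight, a repeated vertex lets one cut a closed subwalk
of nonpositive weight out of any walk. Hence every closed walk has weight `≤ 0`, every entry of
every power `P^{⊗k}` is bounded by the corresponding entry of `P*`, and `P*_{ii} = 0`.
A critical circuit through `i` has weight `0` and is a closed walk at `i` of positive length,
so `P ⊗ p_i = p_i` and `p_i = (−p_{ii}) ⊗ p_i ∈ U^{(i)}`. Conversely, `P ⊗ v = v` gives
`P^{⊗k}_{ri} + v_i ≤ v_r` for all `k`, that is `p_i ≤ (−v_i) ⊗ v`.
-/

noncomputable section

open Finset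

lemma WithBot.add_finset_sup {α κ : Type*} [AddCommMonoid α] [LinearOrder α]
    [IsOrderedAddMonoid α] (s : Finset κ) (f : κ → WithBot α) (c : WithBot α) :
    c + s.sup f = s.sup fun k => c + f k :=
  apply_sup_eq_sup_comp_of_linearOrder (c + ·) (monotone_id.const_add c) (WithBot.add_bot c)

lemma WithBot.finset_sup_add {α κ : Type*} [AddCommMonoid α] [LinearOrder α]
    [IsOrderedAddMonoid α] (s : Finset κ) (f : κ → WithBot α) (c : WithBot α) :
    s.sup f + c = s.sup fun k => f k + c :=
  apply_sup_eq_sup_comp_of_linearOrder (· + c) (monotone_id.add_const c) (WithBot.bot_add c)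

@[simp] lemma mpNeg_zero : mpNeg 0 = 0 := by
  simp [mpNeg, ← WithBot.coe_zero]

lemma le_mpNeg_add_of_add_le {a b c : RMax} (h : a + c ≤ b) (hc : c ≠ ⊥) : a ≤ mpNeg c + b := by
  lift c to ℝ using hc
  induction a using WithBot.recBotCoe with
  | bot => exact bot_le
  | coe a =>
    induction b using WithBot.recBotCoe with
    | bot => exact absurd (le_bot_iff.mp h) (WithBot.coe_ne_bot (a := a + c))
    | coe b =>
      simp only [mpNeg, WithBot.map_coe, ← WithBot.coe_add, WithBot.coe_le_coe] at h ⊢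
      linarith

variable {ι : Type} (P : Matrix ι ι RMax)

/-- A walk of length `m` in `G(P)` is encoded by its vertex sequence `w 0, …, w m`;
the values of `w` beyond `m` play no role. -/
def walkWeight (w : ℕ → ι) (m : ℕ) : RMax :=
  ∑ t ∈ range m, P (w t) (w (t + 1))

lemma walkWeight_add (w : ℕ → ι) (a b : ℕ) :
    walkWeight P w (a + b) = walkWeight P w a + walkWeight P (fun t => w (a + t)) b := by
  simp only [walkWeight, sum_range_add, add_assoc]

lemma walkWeight_succ' (w : ℕ → ι) (m : ℕ) :
    walkWeight P w (m + 1) = P (w 0) (w 1) + walkWeight P (fun t => w (t + 1)) m := by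
  simp only [walkWeight, sum_range_succ', add_comm]

lemma walkWeight_eq_cycle_add_shortcut (w : ℕ → ι) (k L r : ℕ) (hcycle : w k = w (k + L)) :
    ∃ w' : ℕ → ι, w' 0 = w 0 ∧ w' (k + r) = w (k + L + r) ∧
      walkWeight P w (k + L + r) =
        walkWeight P (fun t => w (k + t)) L + walkWeight P w' (k + r) := by
  refine ⟨fun t => if t ≤ k then w t else w (t + L), by simp, ?_, ?_⟩
  · rcases r.eq_zero_or_pos with rfl | hr
    · simpa using hcycle
    · simp only [show ¬k + r ≤ k by omega, if_false]
      ring_nf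
  · have hprefix : walkWeight P (fun t => if t ≤ k then w t else w (t + L)) k =
        walkWeight P w k :=
      sum_congr rfl fun t ht => by
        have : t + 1 ≤ k := mem_range.mp ht
        simp only [this, (Nat.le_succ t).trans this, if_true]
    have hsuffix : (fun t => (fun t => if t ≤ k then w t else w (t + L)) (k + t)) =
        fun t => w (k + L + t) := by
      funext t
      rcases t.eq_zero_or_pos with rfl | ht
      · simpa using hcycle
      · simp only [show ¬k + t ≤ k by omega, if_false]
        ring_nf
    rw [walkWeight_add, walkWeight_add, walkWeight_add P _ k r, hprefix, hsuffix]
    simp only [add_assoc, add_left_comm]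

lemma exists_isCircuit_mcWeight_eq_walkWeight [DecidableEq ι] (w : ℕ → ι) {m : ℕ} (hm : 0 < m)
    (hinj : Set.InjOn w (Set.Iio m)) (hclosed : w m = w 0) :
    ∃ C : MultiCircuit ι, IsCircuit C ∧ mcWeight P C = walkWeight P w m := by
  set l := (List.range m).map w
  have hlen : l.length = m := by simp [l]
  have hnd : l.Nodup :=
    List.nodup_range.map_on fun a ha b hb => hinj (by simpa using ha) (by simpa using hb)
  have hget : ∀ t (ht : t < l.length), l[t] = w t := by simp [l]
  have hsucc : ∀ t < m, l.formPerm (w t) = w (t + 1) := by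
    intro t ht
    rw [← hget t (hlen ▸ ht), List.formPerm_apply_getElem l hnd, hget, hlen]
    rcases (Nat.succ_le_of_lt ht).eq_or_lt with h | h
    · rw [← h, Nat.mod_self, ← hclosed, ← h]
    · rw [Nat.mod_eq_of_lt h]
  have hsameCycle : ∀ t < m, l.formPerm.SameCycle (w 0) (w t) := by
    intro t ht
    refine ⟨t, ?_⟩
    have := List.formPerm_pow_apply_getElem l hnd t 0 (hlen ▸ hm)
    simpa [hget, hlen, Nat.mod_eq_of_lt ht] using this
  refine ⟨⟨(range m).image w, l.formPerm,
    fun v hv => List.formPerm_apply_of_notMem (by simpa [l] using hv)⟩, ⟨?_, ?_⟩, ?_⟩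
  · exact ⟨w 0, mem_image_of_mem w (mem_range.mpr hm)⟩
  · simp only [mem_image, mem_range]
    rintro _ ⟨a, ha, rfl⟩ _ ⟨b, hb, rfl⟩
    exact (hsameCycle a ha).symm.trans (hsameCycle b hb)
  · rw [mcWeight, sum_image fun a ha b hb => hinj (by simpa using ha) (by simpa using hb)]
    exact sum_congr rfl fun t ht => by rw [hsucc t (mem_range.mp ht)]

lemma IsCircuit.walkWeight_orbit [Finite ι] {C : MultiCircuit ι} (hC : IsCircuit C) {i : ι}
    (hi : i ∈ C.verts) :
    walkWeight P (fun t => C.perm^[t] i) (Function.minimalPeriod C.perm i) = mcWeight P C := by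
  have hmaps : ∀ v ∈ C.verts, C.perm v ∈ C.verts := fun v hv => by
    by_contra h
    rw [C.perm.injective (C.fixes _ h)] at h
    exact h hv
  have horbit : ∀ t, C.perm^[t] i ∈ C.verts := fun t => by
    induction t with
    | zero => exact hi
    | succ t ih => exact Function.iterate_succ_apply' C.perm t i ▸ hmaps _ ih
  refine sum_nbij (fun t => C.perm^[t] i) (fun t _ => horbit t)
    (Function.iterate_injOn_Iio_minimalPeriod.mono fun t ht => by simpa using ht)
    (fun v hv => ?_) (fun t _ => by simp only [Function.iterate_succ_apply'])
  obtain ⟨k, rfl⟩ := (hC.2 i hi v hv).exists_nat_pow_eq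
  refine ⟨k % Function.minimalPeriod C.perm i, ?_, ?_⟩
  · simpa using Nat.mod_lt _ (Function.minimalPeriod_pos_of_mem_periodicPts
      (C.perm.injective.mem_periodicPts i))
  · simp [Function.iterate_mod_minimalPeriod_eq, Equiv.Perm.coe_pow]

def NoPositiveCircuit : Prop :=
  ∀ C : MultiCircuit ι, IsCircuit C → InGraph P C → mcWeight P C ≤ 0

variable {P}

lemma IsMaxCycleMean.noPositiveCircuit (hP : IsMaxCycleMean P 0) : NoPositiveCircuit P :=
  fun C hC hCP => by simpa using hP.1 C hC hCP

lemma IsCritical.mcWeight_nonneg (hP : IsMaxCycleMean P 0) {D : MultiCircuit ι}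
    (hD : IsCritical P D) : 0 ≤ mcWeight P D := by
  obtain ⟨D₀, hD₀, hD₀P, hw₀⟩ : ∃ D₀, IsCircuit D₀ ∧ InGraph P D₀ ∧ mcWeight P D₀ = 0 := by
    rcases hP.2 with ⟨D₀, h₁, h₂, h₃⟩ | ⟨h, -⟩
    · exact ⟨D₀, h₁, h₂, by simpa using h₃⟩
    · simp at h
  obtain ⟨c, hc⟩ := Nat.exists_eq_add_one.mpr (card_pos.mpr hD₀.1)
  have hcompare := hD.2.2 D₀ hD₀ hD₀P
  rw [hw₀, nsmul_zero, hc, succ_nsmul] at hcompare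
  exact hcompare.trans (add_le_of_nonpos_left (nsmul_nonpos (hP.noPositiveCircuit D hD.1 hD.2.1) c))

lemma NoPositiveCircuit.walkWeight_nonpos_of_closed [DecidableEq ι] (hP : NoPositiveCircuit P)
    (m : ℕ) (w : ℕ → ι) (hclosed : w m = w 0) : walkWeight P w m ≤ 0 := by
  induction m using Nat.strong_induction_on generalizing w with
  | _ m ih =>
  by_cases hinj : Set.InjOn w (Set.Iio m)
  · rcases m.eq_zero_or_pos with rfl | hm
    · simp [walkWeight]
    obtain ⟨C, hC, hweight⟩ := exists_isCircuit_mcWeight_eq_walkWeight P w hm hinj hclosed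
    by_cases hbot : walkWeight P w m = ⊥
    · simp [hbot]
    rw [← hweight] at hbot ⊢
    exact hP C hC fun v hv hv_bot => hbot (WithBot.sum_eq_bot_iff.mpr ⟨v, hv, hv_bot⟩)
  · obtain ⟨k, l, hkl, hlm, hrepeat⟩ : ∃ k l, k < l ∧ l < m ∧ w k = w l := by
      simp only [Set.InjOn, Set.mem_Iio, not_forall] at hinj
      obtain ⟨a, ha, b, hb, hab, hne⟩ := hinj
      rcases lt_or_gt_of_ne hne with h | h
      exacts [⟨a, b, h, hb, hab⟩, ⟨b, a, h, ha, hab.symm⟩]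
    obtain ⟨L, rfl⟩ := Nat.exists_eq_add_of_le hkl.le
    obtain ⟨r, rfl⟩ := Nat.exists_eq_add_of_le hlm.le
    obtain ⟨w', h0, hend, hsplit⟩ := walkWeight_eq_cycle_add_shortcut P w k L r hrepeat
    rw [hsplit]
    exact add_nonpos (ih L (by omega) _ (by simpa using hrepeat.symm))
      (ih (k + r) (by omega) w' (by rw [hend, h0, hclosed]))

variable (P) [Fintype ι] [DecidableEq ι]

lemma mpPow_succ_apply (m : ℕ) (a s : ι) :
    mpPow P (m + 1) a s = univ.sup fun j => P a j + mpPow P m j s :=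
  rfl

lemma walkWeight_le_mpPow (w : ℕ → ι) (m : ℕ) : walkWeight P w m ≤ mpPow P m (w 0) (w m) := by
  induction m generalizing w with
  | zero => simp [walkWeight, mpPow, mpId]
  | succ m ih =>
    rw [walkWeight_succ', mpPow_succ_apply]
    exact (add_le_add_right (ih _) _).trans
      (le_sup (f := fun j => P (w 0) j + mpPow P m j (w (m + 1))) (mem_univ (w 1)))

lemma mpPow_eq_bot_or_exists_walk (m : ℕ) (a s : ι) :
    mpPow P m a s = ⊥ ∨
      ∃ w : ℕ → ι, w 0 = a ∧ w m = s ∧ walkWeight P w m = mpPow P m a s := by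
  induction m generalizing a with
  | zero =>
    by_cases h : a = s
    · exact Or.inr ⟨fun _ => a, rfl, h, by simp [walkWeight, mpPow, mpId, h]⟩
    · exact Or.inl (by simp [mpPow, mpId, h])
  | succ m ih =>
    obtain ⟨j, -, hj⟩ := exists_mem_eq_sup univ ⟨a, mem_univ a⟩ fun j => P a j + mpPow P m j s
    rw [mpPow_succ_apply, hj]
    rcases ih j with hbot | ⟨w, h0, hm, hw⟩
    · exact Or.inl (by rw [hbot, WithBot.add_bot])
    · refine Or.inr ⟨fun t => if t = 0 then a else w (t - 1), rfl, by simpa using hm, ?_⟩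
      simp [walkWeight_succ', h0, hw]

variable {P}

lemma NoPositiveCircuit.walkWeight_le_mpStar (hP : NoPositiveCircuit P) (m : ℕ) (w : ℕ → ι) :
    walkWeight P w m ≤ mpStar P (w 0) (w m) := by
  induction m using Nat.strong_induction_on generalizing w with
  | _ m ih =>
  by_cases hm : m < Fintype.card ι
  · exact (walkWeight_le_mpPow P w m).trans
      (le_sup (f := fun k => mpPow P k (w 0) (w m)) (mem_range.mpr hm))
  obtain ⟨k, l, hkl, hlm, hrepeat⟩ : ∃ k l, k < l ∧ l ≤ m ∧ w k = w l := by
    obtain ⟨a, ha, b, hb, hne, hab⟩ := exists_ne_map_eq_of_card_lt_of_maps_to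
      (s := range (m + 1)) (t := (univ : Finset ι)) (by rw [card_univ, card_range]; omega)
      fun _ _ => mem_coe.mpr (mem_univ _)
    rw [mem_range] at ha hb
    rcases lt_or_gt_of_ne hne with h | h
    exacts [⟨a, b, h, by omega, hab⟩, ⟨b, a, h, by omega, hab.symm⟩]
  obtain ⟨L, rfl⟩ := Nat.exists_eq_add_of_le hkl.le
  obtain ⟨r, rfl⟩ := Nat.exists_eq_add_of_le hlm
  obtain ⟨w', h0, hend, hsplit⟩ := walkWeight_eq_cycle_add_shortcut P w k L r hrepeat
  calc walkWeight P w (k + L + r)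
      = walkWeight P (fun t => w (k + t)) L + walkWeight P w' (k + r) := hsplit
    _ ≤ 0 + walkWeight P w' (k + r) := by
      gcongr
      exact hP.walkWeight_nonpos_of_closed L _ (by simpa using hrepeat.symm)
    _ ≤ mpStar P (w 0) (w (k + L + r)) := by
      rw [zero_add, ← h0, ← hend]
      exact ih (k + r) (by omega) w'

lemma NoPositiveCircuit.mpPow_le_mpStar (hP : NoPositiveCircuit P) (m : ℕ) (a s : ι) :
    mpPow P m a s ≤ mpStar P a s := by
  rcases mpPow_eq_bot_or_exists_walk P m a s with h | ⟨w, rfl, rfl, hw⟩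
  · simp [h]
  · exact hw ▸ hP.walkWeight_le_mpStar m w

lemma NoPositiveCircuit.mpStar_self (hP : NoPositiveCircuit P) (i : ι) : mpStar P i i = 0 := by
  refine le_antisymm (Finset.sup_le fun k _ => ?_) ?_
  · rcases mpPow_eq_bot_or_exists_walk P k i i with h | ⟨w, h0, hk, hw⟩
    · simp [h]
    · exact hw ▸ hP.walkWeight_nonpos_of_closed k w (hk.trans h0.symm)
  · have hpos : 0 < Fintype.card ι := Fintype.card_pos_iff.mpr ⟨i⟩
    calc (0 : RMax) = mpPow P 0 i i := by simp [mpPow, mpId]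
      _ ≤ mpStar P i i := le_sup (f := fun k => mpPow P k i i) (mem_range.mpr hpos)

lemma NoPositiveCircuit.mpPow_succ_le_mpMulVec_mpStar_col (hP : NoPositiveCircuit P) (k : ℕ)
    (r i : ι) : mpPow P (k + 1) r i ≤ mpMulVec P (fun r => mpStar P r i) r :=
  Finset.sup_le fun j _ => (add_le_add_right (hP.mpPow_le_mpStar k j i) _).trans
    (le_sup (f := fun j => P r j + mpStar P j i) (mem_univ j))

lemma NoPositiveCircuit.mpMulVec_mpStar_col_le (hP : NoPositiveCircuit P) (i : ι) :
    mpMulVec P (fun r => mpStar P r i) ≤ fun r => mpStar P r i := by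
  intro r
  refine Finset.sup_le fun j _ => ?_
  simp only [mpStar, WithBot.add_finset_sup]
  refine Finset.sup_le fun k _ => ?_
  calc P r j + mpPow P k j i
      ≤ mpPow P (k + 1) r i := le_sup (f := fun j => P r j + mpPow P k j i) (mem_univ j)
    _ ≤ mpStar P r i := hP.mpPow_le_mpStar (k + 1) r i

/-- `P ⊗ P*` is `P ⊕ P² ⊕ ⋯` and so lacks only the `E` summand of `P*`; the closed walk
through `i` supplies the diagonal entry `0` that this summand contributes. -/
lemma NoPositiveCircuit.mpMulVec_mpStar_col (hP : NoPositiveCircuit P) {i : ι} {d : ℕ}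
    (hd : 0 ≤ mpPow P (d + 1) i i) :
    mpMulVec P (fun r => mpStar P r i) = fun r => mpStar P r i := by
  refine le_antisymm (hP.mpMulVec_mpStar_col_le i) fun r => Finset.sup_le fun k _ => ?_
  rcases k with _ | k
  · by_cases hr : r = i
    · subst hr
      calc mpPow P 0 r r = 0 := by simp [mpPow, mpId]
        _ ≤ mpPow P (d + 1) r r := hd
        _ ≤ _ := hP.mpPow_succ_le_mpMulVec_mpStar_col d r r
    · simp [mpPow, mpId, hr]
  · exact hP.mpPow_succ_le_mpMulVec_mpStar_col k r i

lemma mpPow_add_le_of_mpMulVec_le {v : Vec ι} (hv : mpMulVec P v ≤ v) (m : ℕ) (r i : ι) :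
    mpPow P m r i + v i ≤ v r := by
  induction m generalizing r with
  | zero => by_cases hr : r = i <;> simp [mpPow, mpId, hr]
  | succ m ih =>
    rw [mpPow_succ_apply, WithBot.finset_sup_add]
    refine Finset.sup_le fun j _ => ?_
    calc P r j + mpPow P m j i + v i = P r j + (mpPow P m j i + v i) := add_assoc _ _ _
      _ ≤ P r j + v j := add_le_add_right (ih j) _
      _ ≤ mpMulVec P v r := le_sup (f := fun j => P r j + v j) (mem_univ j)
      _ ≤ v r := hv r

lemma mpStar_add_le_of_mpMulVec_le {v : Vec ι} (hv : mpMulVec P v ≤ v) (r i : ι) :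
    mpStar P r i + v i ≤ v r := by
  simp only [mpStar, WithBot.finset_sup_add]
  exact Finset.sup_le fun m _ => mpPow_add_le_of_mpMulVec_le hv m r i

lemma exists_mpPow_self_nonneg_of_isCritical (hP : IsMaxCycleMean P 0) {D : MultiCircuit ι}
    (hD : IsCritical P D) {i : ι} (hi : i ∈ D.verts) : ∃ d, 0 ≤ mpPow P (d + 1) i i := by
  obtain ⟨d, hd⟩ := Nat.exists_eq_add_one.mpr (Function.minimalPeriod_pos_of_mem_periodicPts
    (D.perm.injective.mem_periodicPts i))
  refine ⟨d, ?_⟩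
  calc (0 : RMax) ≤ mcWeight P D := hD.mcWeight_nonneg hP
    _ = walkWeight P (fun t => D.perm^[t] i) (d + 1) := hd ▸ (hD.1.walkWeight_orbit P hi).symm
    _ ≤ mpPow P (d + 1) i (D.perm^[d + 1] i) := walkWeight_le_mpPow P _ (d + 1)
    _ = mpPow P (d + 1) i i := by rw [← hd, Function.iterate_minimalPeriod]

end

theorem star_column_minimal {n : ℕ} (P : Matrix (Fin n) (Fin n) RMax)
    (hP : IsMaxCycleMean P (0 : RMax)) (i : Fin n)
    (hi : ∃ D : MultiCircuit (Fin n), IsCritical P D ∧ i ∈ D.verts) :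
    (fun r => mpStar P r i) ∈
      {u : Vec (Fin n) | ∃ v : Vec (Fin n), mpMulVec P v = v ∧ v i ≠ ⊥ ∧
        u = fun r => mpNeg (v i) + v r} ∧
    ∀ u ∈ {u : Vec (Fin n) | ∃ v : Vec (Fin n), mpMulVec P v = v ∧ v i ≠ ⊥ ∧
        u = fun r => mpNeg (v i) + v r},
      ∀ r : Fin n, mpStar P r i ≤ u r := by
  obtain ⟨D, hD, hiD⟩ := hi
  obtain ⟨d, hd⟩ := exists_mpPow_self_nonneg_of_isCritical hP hD hiD
  have hdiag : mpStar P i i = 0 := hP.noPositiveCircuit.mpStar_self i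
  refine ⟨⟨_, hP.noPositiveCircuit.mpMulVec_mpStar_col hd, by simp [hdiag], by simp [hdiag]⟩, ?_⟩
  rintro _ ⟨v, hv, hvi, rfl⟩ r
  exact le_mpNeg_add_of_add_le (mpStar_add_le_of_mpMulVec_le hv.le r i) hvi
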